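/- Consider the system x_{t+1} = A x_t + w_t, y_t = C x_t + v_t with x_0 = 0, ‖w_t‖ ≤ C_w, ‖v_t‖ ≤ C_v for all t, and the convention y_s = 0 for s ≤ 0. Suppose A ∈ ℝ^{n×n} is diagonalizable with all eigenvalues real and contained in [−1, 1], i.e., A = S D S⁻¹ with D diagonal and real entries in [−1, 1], and set κ_A := ‖S‖ ‖S⁻¹‖. Then under the 2-lag predictive hint ỹ_t := y_{t-2}, the residual satisfies, for all t ≥ 1, ‖y_t − ỹ_t‖ ≤ 2 C_v + (1 + κ_A + 2 n κ_A) ‖C‖ C_w. -/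

import Mathlib

/-!
Two steps of the dynamics give `x_t - x_{t-2} = (A² - 1) x_{t-2} + A w_{t-2} + w_{t-1}`, so the
hint is accurate up to noise once `(A² - 1) x_{t-2} = ∑_k (A² - 1) A^k w_{t-3-k}` is bounded
uniformly in `t`. Diagonalising `A = S D S⁻¹`, the operator `(A² - 1) A^k` is
`S diag((d_i² - 1) d_i^k) S⁻¹`, and for real `|d| ≤ 1` the partial sums of
`∑_k (1 - d²) |d|^k` are at most `1 + |d| ≤ 2`. Bounding each diagonal by the sum of its entries
gives `∑_k ‖(A² - 1) A^k‖ ≤ 2 n κ_A`.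
-/

/-- The operator norm of a matrix induced by the Euclidean (ℓ²) norms.  For a column
matrix (a vector), this is the Euclidean norm of the vector. -/
noncomputable def opNorm {𝕜 : Type*} [RCLike 𝕜] {m n : Type*} [Fintype m] [Fintype n]
    [DecidableEq n] (A : Matrix m n 𝕜) : ℝ :=
  ‖LinearMap.toContinuousLinearMap (Matrix.toEuclideanLin A)‖

open Finset
open scoped Matrix.Norms.L2Operator

lemma opNorm_eq_l2_opNorm {𝕜 : Type*} [RCLike 𝕜] {m n : Type*} [Fintype m] [Fintype n]
    [DecidableEq n] (A : Matrix m n 𝕜) : opNorm A = ‖A‖ := rfl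

lemma sum_range_abs_sq_sub_one_mul_pow_le_two {d : ℝ} (hd : |d| ≤ 1) (m : ℕ) :
    ∑ k ∈ range m, |(d ^ 2 - 1) * d ^ k| ≤ 2 := by
  have hterm : ∀ k, |(d ^ 2 - 1) * d ^ k| = (1 + |d|) * ((1 - |d|) * |d| ^ k) := fun k => by
    rw [abs_mul, abs_pow, abs_of_nonpos (by nlinarith [sq_abs d, abs_nonneg d]), ← sq_abs d]
    ring
  simp_rw [hterm, ← mul_sum, mul_neg_geom_sum]
  nlinarith [abs_nonneg d, pow_nonneg (abs_nonneg d) m]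

namespace Matrix

section L2OpNorm

variable {𝕜 : Type*} [RCLike 𝕜] {m n l o : Type*} [Fintype m] [Fintype n] [Fintype l]
  [Fintype o] [DecidableEq n] [DecidableEq l] [DecidableEq o]

lemma l2_opNorm_diagonal_le_sum (v : n → 𝕜) : ‖diagonal v‖ ≤ ∑ i, ‖v i‖ := by
  rw [l2_opNorm_diagonal]
  exact (pi_norm_le_iff_of_nonneg (by positivity)).2 fun i =>
    single_le_sum (fun j _ => norm_nonneg (v j)) (mem_univ i)

lemma l2_opNorm_mul_mul_le (A : Matrix m n 𝕜) (B : Matrix n l 𝕜) (C : Matrix l o 𝕜) :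
    ‖A * B * C‖ ≤ ‖A‖ * ‖B‖ * ‖C‖ :=
  (l2_opNorm_mul _ _).trans (mul_le_mul_of_nonneg_right (l2_opNorm_mul _ _) (norm_nonneg _))

lemma l2_opNorm_conj_diagonal_le {S S' : Matrix n n 𝕜} {d : n → 𝕜} (hd : ∀ i, ‖d i‖ ≤ 1) :
    ‖S * diagonal d * S'‖ ≤ ‖S‖ * ‖S'‖ := by
  have hD : ‖diagonal d‖ ≤ 1 := by
    rw [l2_opNorm_diagonal]
    exact (pi_norm_le_iff_of_nonneg zero_le_one).2 hd
  calc ‖S * diagonal d * S'‖ ≤ ‖S‖ * ‖diagonal d‖ * ‖S'‖ := l2_opNorm_mul_mul_le _ _ _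
    _ ≤ ‖S‖ * 1 * ‖S'‖ := by gcongr
    _ = ‖S‖ * ‖S'‖ := by ring

end L2OpNorm

section LinearRecurrence

variable {n o : Type*} [Fintype n] [DecidableEq n]

lemma eq_sum_pow_mul_of_forall_succ_eq {R : Type*} [Semiring R] {A : Matrix n n R}
    {x w : ℕ → Matrix n o R} (hx0 : x 0 = 0) (hx : ∀ k, x (k + 1) = A * x k + w k) (m : ℕ) :
    x m = ∑ j ∈ range m, A ^ j * w (m - 1 - j) := by
  induction m with
  | zero => simpa using hx0
  | succ m ih =>
    rw [hx, ih, Matrix.mul_sum, sum_range_succ', pow_zero, Matrix.one_mul, Nat.add_sub_cancel,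
      Nat.sub_zero]
    refine congrArg (· + w m) (sum_congr rfl fun j hj => ?_)
    rw [← Matrix.mul_assoc, ← pow_succ', show m - 1 - j = m - (j + 1) by omega]

lemma norm_mul_le_sum_norm_mul_pow {𝕜 : Type*} [RCLike 𝕜] {l : Type*} [Fintype l] [Fintype o]
    [DecidableEq o] {A : Matrix n n 𝕜} {B : Matrix l n 𝕜} {x w : ℕ → Matrix n o 𝕜} {c : ℝ}
    (hx0 : x 0 = 0) (hx : ∀ k, x (k + 1) = A * x k + w k) (hw : ∀ k, ‖w k‖ ≤ c) (m : ℕ) :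
    ‖B * x m‖ ≤ (∑ k ∈ range m, ‖B * A ^ k‖) * c := by
  rw [eq_sum_pow_mul_of_forall_succ_eq hx0 hx, Matrix.mul_sum, sum_mul]
  refine (norm_sum_le _ _).trans (sum_le_sum fun k _ => ?_)
  rw [← Matrix.mul_assoc]
  exact (l2_opNorm_mul _ _).trans (mul_le_mul_of_nonneg_left (hw _) (norm_nonneg _))

lemma sub_eq_of_forall_succ_eq {R : Type*} [Ring R] {A : Matrix n n R} {x w : ℤ → Matrix n o R}
    (hx : ∀ t, x (t + 1) = A * x t + w t) (t : ℤ) :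
    x (t + 2) - x t = (A ^ 2 - 1) * x t + A * w t + w (t + 1) := by
  rw [show t + 2 = t + 1 + 1 by ring, hx, hx, sq, Matrix.sub_mul, Matrix.one_mul,
    Matrix.mul_add, Matrix.mul_assoc]
  abel

end LinearRecurrence

section Diagonalizable

variable {n : Type*} [Fintype n] [DecidableEq n]

lemma sq_sub_one_mul_pow_conj_diagonal {R : Type*} [CommRing R] {S S' : Matrix n n R}
    {d : n → R} (hSS' : S * S' = 1) (hS'S : S' * S = 1) (k : ℕ) :
    ((S * diagonal d * S') ^ 2 - 1) * (S * diagonal d * S') ^ k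
      = S * diagonal (fun i => (d i ^ 2 - 1) * d i ^ k) * S' := by
  let u : (Matrix n n R)ˣ := ⟨S, S', hSS', hS'S⟩
  have hpow : ∀ j, (S * diagonal d * S') ^ j = S * diagonal (d ^ j) * S' := fun j => by
    simpa [u, diagonal_pow] using u.conj_pow (diagonal d) j
  rw [Matrix.sub_mul, Matrix.one_mul, ← pow_add, hpow, hpow, ← Matrix.sub_mul, ← Matrix.mul_sub,
    diagonal_sub]
  congr 3
  ext i
  simp only [Pi.pow_apply]
  ring

lemma sum_norm_sq_sub_one_mul_pow_conj_diagonal_le {S S' : Matrix n n ℝ} {d : n → ℝ}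
    (hSS' : S * S' = 1) (hS'S : S' * S = 1) (hd : ∀ i, |d i| ≤ 1) (m : ℕ) :
    ∑ k ∈ range m, ‖((S * diagonal d * S') ^ 2 - 1) * (S * diagonal d * S') ^ k‖
      ≤ 2 * Fintype.card n * (‖S‖ * ‖S'‖) := by
  calc ∑ k ∈ range m, ‖((S * diagonal d * S') ^ 2 - 1) * (S * diagonal d * S') ^ k‖
      ≤ ∑ k ∈ range m, (∑ i, |(d i ^ 2 - 1) * d i ^ k|) * (‖S‖ * ‖S'‖) := by
        refine sum_le_sum fun k _ => ?_
        rw [sq_sub_one_mul_pow_conj_diagonal hSS' hS'S]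
        calc _ ≤ ‖S‖ * ‖diagonal fun i => (d i ^ 2 - 1) * d i ^ k‖ * ‖S'‖ :=
              l2_opNorm_mul_mul_le _ _ _
          _ ≤ ‖S‖ * (∑ i, |(d i ^ 2 - 1) * d i ^ k|) * ‖S'‖ := by
              gcongr
              exact l2_opNorm_diagonal_le_sum _
          _ = _ := by ring
    _ = (∑ i, ∑ k ∈ range m, |(d i ^ 2 - 1) * d i ^ k|) * (‖S‖ * ‖S'‖) := by
        rw [← sum_mul, sum_comm]
    _ ≤ 2 * Fintype.card n * (‖S‖ * ‖S'‖) := by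
        gcongr
        simpa [mul_comm] using sum_le_sum fun i (_ : i ∈ univ) =>
          sum_range_abs_sq_sub_one_mul_pow_le_two (hd i) m

lemma norm_sq_sub_one_mul_le_of_forall_succ_eq {o : Type*} [Fintype o] [DecidableEq o]
    {S S' : Matrix n n ℝ} {d : n → ℝ} {x w : ℤ → Matrix n o ℝ} {c : ℝ}
    (hSS' : S * S' = 1) (hS'S : S' * S = 1) (hd : ∀ i, |d i| ≤ 1)
    (hx0 : ∀ s ≤ 0, x s = 0) (hx : ∀ t, x (t + 1) = S * diagonal d * S' * x t + w t)
    (hw : ∀ t, ‖w t‖ ≤ c) (s : ℤ) :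
    ‖((S * diagonal d * S') ^ 2 - 1) * x s‖ ≤ 2 * Fintype.card n * (‖S‖ * ‖S'‖) * c := by
  have hc : 0 ≤ c := (norm_nonneg _).trans (hw 0)
  rcases le_or_gt s 0 with hs | hs
  · rw [hx0 s hs, Matrix.mul_zero, norm_zero]
    positivity
  lift s to ℕ using hs.le
  exact (norm_mul_le_sum_norm_mul_pow (x := fun k : ℕ => x k) (w := fun k : ℕ => w k)
    (hx0 0 le_rfl) (fun k => by exact_mod_cast hx k) (fun k => hw k) s).trans
    (mul_le_mul_of_nonneg_right (sum_norm_sq_sub_one_mul_pow_conj_diagonal_le hSS' hS'S hd s) hc)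

end Diagonalizable

end Matrix

theorem two_lag_hint_residual_bound_general
    (n p : ℕ)
    (A : Matrix (Fin n) (Fin n) ℝ) (C : Matrix (Fin p) (Fin n) ℝ)
    (S S' : Matrix (Fin n) (Fin n) ℝ) (dvec : Fin n → ℝ)
    (hd : ∀ i, dvec i ∈ Set.Icc (-1 : ℝ) 1)
    (hSS' : S * S' = 1) (hS'S : S' * S = 1)
    (hA : A = S * Matrix.diagonal dvec * S')
    (κA : ℝ) (hκ : κA = opNorm S * opNorm S')
    (Cw Cv : ℝ)
    (x w : ℤ → Matrix (Fin n) (Fin 1) ℝ) (y v : ℤ → Matrix (Fin p) (Fin 1) ℝ)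
    (hx0 : ∀ s : ℤ, s ≤ 0 → x s = 0)
    (hdyn : ∀ t : ℤ, x (t + 1) = A * x t + w t)
    (hout : ∀ t : ℤ, y t = C * x t + v t)
    (hw : ∀ t, opNorm (w t) ≤ Cw)
    (hv : ∀ t, opNorm (v t) ≤ Cv)
    (t : ℤ) :
    opNorm (y t - y (t - 2)) ≤ 2 * Cv + (1 + κA + 2 * n * κA) * opNorm C * Cw := by
  simp only [opNorm_eq_l2_opNorm] at hκ hw hv ⊢
  have hd' : ∀ i, |dvec i| ≤ 1 := fun i => abs_le.mpr (hd i)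
  have hκ0 : 0 ≤ κA := hκ ▸ by positivity
  have hAκ : ‖A‖ ≤ κA := hκ ▸ hA ▸ Matrix.l2_opNorm_conj_diagonal_le hd'
  have hqx : ∀ s, ‖(A ^ 2 - 1) * x s‖ ≤ 2 * n * κA * Cw := by
    subst hA hκ
    simpa using Matrix.norm_sq_sub_one_mul_le_of_forall_succ_eq hSS' hS'S hd' hx0 hdyn hw
  obtain ⟨r, rfl⟩ : ∃ r, t = r + 2 := ⟨t - 2, by ring⟩
  have hy : y (r + 2) - y (r + 2 - 2)
      = C * ((A ^ 2 - 1) * x r + A * w r + w (r + 1)) + (v (r + 2) - v r) := by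
    rw [add_sub_cancel_right, hout, hout, ← Matrix.sub_eq_of_forall_succ_eq hdyn, Matrix.mul_sub]
    abel
  have hx : ‖(A ^ 2 - 1) * x r + A * w r + w (r + 1)‖ ≤ 2 * n * κA * Cw + κA * Cw + Cw :=
    norm_add₃_le.trans (add_le_add_three (hqx r)
      ((Matrix.l2_opNorm_mul _ _).trans (mul_le_mul hAκ (hw r) (norm_nonneg _) hκ0)) (hw _))
  calc ‖y (r + 2) - y (r + 2 - 2)‖
      ≤ ‖C‖ * ‖(A ^ 2 - 1) * x r + A * w r + w (r + 1)‖ + (‖v (r + 2)‖ + ‖v r‖) := by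
        rw [hy]
        exact (norm_add_le _ _).trans (add_le_add (Matrix.l2_opNorm_mul _ _) (norm_sub_le _ _))
    _ ≤ ‖C‖ * (2 * n * κA * Cw + κA * Cw + Cw) + (Cv + Cv) := by
        gcongr
        exacts [hv _, hv _]
    _ = 2 * Cv + (1 + κA + 2 * n * κA) * ‖C‖ * Cw := by ring

/-- bounded residual of the 2-lag hint `ỹ_t = y_{t-2}` for
diagonalizable systems with real spectrum in `[−1,1]`:
`‖y_t − y_{t-2}‖ ≤ 2C_v + (1 + κ_A + 2nκ_A)‖C‖C_w` for all `t ≥ 1`.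
Sequences are indexed by `ℤ` with the conventions `x_s = 0` for `s ≤ 0`,
`w_s = 0` for `s < 0` and `v_s = 0` (hence `y_s = 0`) for `s ≤ 0`. -/
theorem two_lag_hint_residual_bound
    (n p : ℕ)
    (A : Matrix (Fin n) (Fin n) ℝ) (C : Matrix (Fin p) (Fin n) ℝ)
    (S S' : Matrix (Fin n) (Fin n) ℝ) (dvec : Fin n → ℝ)
    (hd : ∀ i, dvec i ∈ Set.Icc (-1 : ℝ) 1)
    (hSS' : S * S' = 1) (hS'S : S' * S = 1)
    (hA : A = S * Matrix.diagonal dvec * S')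
    (κA : ℝ) (hκ : κA = opNorm S * opNorm S')
    (Cw Cv : ℝ)
    (x w : ℤ → Matrix (Fin n) (Fin 1) ℝ) (y v : ℤ → Matrix (Fin p) (Fin 1) ℝ)
    (hx0 : ∀ s : ℤ, s ≤ 0 → x s = 0)
    (hw0 : ∀ s : ℤ, s < 0 → w s = 0)
    (hv0 : ∀ s : ℤ, s ≤ 0 → v s = 0)
    (hdyn : ∀ t : ℤ, x (t + 1) = A * x t + w t)
    (hout : ∀ t : ℤ, y t = C * x t + v t)
    (hw : ∀ t, opNorm (w t) ≤ Cw)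
    (hv : ∀ t, opNorm (v t) ≤ Cv)
    (t : ℤ) (ht : 1 ≤ t) :
    opNorm (y t - y (t - 2)) ≤ 2 * Cv + (1 + κA + 2 * n * κA) * opNorm C * Cw :=
  two_lag_hint_residual_bound_general n p A C S S' dvec hd hSS' hS'S hA κA hκ Cw Cv x w y v hx0 hdyn
    hout hw hv t
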